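/- arXiv:2005.10742 — 5 statements merged into one kernel-verified Lean document; each statement's English description precedes it below -/
import Mathlib

section
/- Let F, c : ℝ² → ℝ be smooth with c nowhere zero, let Z be a smooth vector field on ℝ², and set F' = c·F, Z' = (1/c)·Z. If p ∈ ℝ² satisfies F(p) = 0 and Z(F)(p) = 0, then (Z')²(F')(p) = (1/c(p))·Z²(F)(p), where Z² denotes the iterated Lie derivative Z(Z(·)). -/
/-- Lie derivative of `f` along the vector field `Z` on `ℝ²`. -/
noncomputable def lieD (Z : ℝ × ℝ → ℝ × ℝ) (f : ℝ × ℝ → ℝ) : ℝ × ℝ → ℝ :=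
  fun p => fderiv ℝ f p (Z p)

lemma lieD_contDiff {Z : ℝ × ℝ → ℝ × ℝ} {f : ℝ × ℝ → ℝ}
    (hf : ContDiff ℝ (⊤ : ℕ∞) f) (hZ : ContDiff ℝ (⊤ : ℕ∞) Z) : ContDiff ℝ (⊤ : ℕ∞) (lieD Z f) :=
  (hf.fderiv_right (by simp)).clm_apply hZ

theorem stmt1 (F c : ℝ × ℝ → ℝ) (Z : ℝ × ℝ → ℝ × ℝ)
    (hF : ContDiff ℝ (⊤ : ℕ∞) F) (hc : ContDiff ℝ (⊤ : ℕ∞) c) (hZ : ContDiff ℝ (⊤ : ℕ∞) Z)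
    (hc0 : ∀ p, c p ≠ 0)
    (F' : ℝ × ℝ → ℝ) (hF' : F' = fun p => c p * F p)
    (Z' : ℝ × ℝ → ℝ × ℝ) (hZ' : Z' = fun p => (c p)⁻¹ • Z p)
    (p : ℝ × ℝ) (hFp : F p = 0) (hZFp : lieD Z F p = 0) :
    lieD Z' (lieD Z' F') p = (c p)⁻¹ * lieD Z (lieD Z F) p := by
  have hB : ContDiff ℝ (⊤ : ℕ∞) (lieD Z F) := lieD_contDiff hF hZ
  have hA : ContDiff ℝ (⊤ : ℕ∞) (lieD Z c) := lieD_contDiff hc hZ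
  have hdc : ∀ q, DifferentiableAt ℝ c q := fun q => hc.differentiable (by simp) q
  have hdF : ∀ q, DifferentiableAt ℝ F q := fun q => hF.differentiable (by simp) q
  have hdA : ∀ q, DifferentiableAt ℝ (lieD Z c) q := fun q => hA.differentiable (by simp) q
  have hdB : ∀ q, DifferentiableAt ℝ (lieD Z F) q := fun q => hB.differentiable (by simp) q
  -- closed form for the first Lie derivative
  have hG : lieD Z' F' = fun q => (c q)⁻¹ * (c q * lieD Z F q + F q * lieD Z c q) := by
    funext q
    have h1 : fderiv ℝ F' q = c q • fderiv ℝ F q + F q • fderiv ℝ c q := by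
      rw [hF']; exact fderiv_mul (hdc q) (hdF q)
    simp only [lieD, hZ', h1, map_smul, ContinuousLinearMap.add_apply,
      ContinuousLinearMap.smul_apply, smul_eq_mul]
  set B := lieD Z F with hBdef
  set A := lieD Z c with hAdef
  set K : ℝ × ℝ → ℝ := fun q => c q * B q + F q * A q with hK
  have hdK : DifferentiableAt ℝ K p :=
    ((hdc p).mul (hdB p)).add ((hdF p).mul (hdA p))
  have hKp : K p = 0 := by simp [hK, hFp, hZFp, ← hBdef]
  -- derivative of K at p applied to Z p
  have hfK : fderiv ℝ K p (Z p) = c p * lieD Z B p := by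
    have h1 : fderiv ℝ (fun q => c q * B q) p
        = c p • fderiv ℝ B p + B p • fderiv ℝ c p := fderiv_mul (hdc p) (hdB p)
    have h2 : fderiv ℝ (fun q => F q * A q) p
        = F p • fderiv ℝ A p + A p • fderiv ℝ F p := fderiv_mul (hdF p) (hdA p)
    have hBp : B p = 0 := hZFp
    have hFZ : fderiv ℝ F p (Z p) = 0 := hZFp
    rw [hK, fderiv_fun_add (f := fun q => c q * B q) (g := fun q => F q * A q) ((hdc p).mul (hdB p)) ((hdF p).mul (hdA p)),
      ContinuousLinearMap.add_apply, h1, h2]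
    simp [hBp, hFp, hFZ, lieD]
  have hdcinv : DifferentiableAt ℝ (fun q => (c q)⁻¹) p := (hdc p).inv (hc0 p)
  have hfG : fderiv ℝ (lieD Z' F') p (Z p) = lieD Z B p := by
    rw [hG]
    erw [fderiv_fun_mul hdcinv hdK, ContinuousLinearMap.add_apply]
    simp only [ContinuousLinearMap.smul_apply, smul_eq_mul, hKp, zero_mul, add_zero]
    rw [hfK, ← mul_assoc, inv_mul_cancel₀ (hc0 p), one_mul]
  -- assemble
  have : lieD Z' (lieD Z' F') p = (c p)⁻¹ * fderiv ℝ (lieD Z' F') p (Z p) := by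
    simp only [lieD, hZ', map_smul, smul_eq_mul]
  rw [this, hfG]
end

section
/- Let F, c : ℝ² → ℝ be smooth with c nowhere zero, let Z be a smooth vector field on ℝ², and set F' = c·F, Z' = (1/c)·Z. If p ∈ ℝ² satisfies F(p) = 0 and Z(F)(p) = 0, then (Z')³(F')(p) = (1/c(p)²)·Z³(F)(p). -/
lemma lieD_smul (a : ℝ × ℝ → ℝ) (Z : ℝ × ℝ → ℝ × ℝ) (f : ℝ × ℝ → ℝ) :
    lieD (fun q => a q • Z q) f = fun q => a q * lieD Z f q := by
  funext q; simp [lieD]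

lemma lieD_mul {Z : ℝ × ℝ → ℝ × ℝ} {g h : ℝ × ℝ → ℝ} {x : ℝ × ℝ}
    (hg : DifferentiableAt ℝ g x) (hh : DifferentiableAt ℝ h x) :
    lieD Z (fun q => g q * h q) x = lieD Z g x * h x + g x * lieD Z h x := by
  simp [lieD, fderiv_fun_mul hg hh]; ring

lemma lieD_add {Z : ℝ × ℝ → ℝ × ℝ} {g h : ℝ × ℝ → ℝ} {x : ℝ × ℝ}
    (hg : DifferentiableAt ℝ g x) (hh : DifferentiableAt ℝ h x) :
    lieD Z (fun q => g q + h q) x = lieD Z g x + lieD Z h x := by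
  simp [lieD, fderiv_fun_add hg hh]

lemma lieD_inv {Z : ℝ × ℝ → ℝ × ℝ} {c : ℝ × ℝ → ℝ} {x : ℝ × ℝ}
    (hc : DifferentiableAt ℝ c x) (h0 : c x ≠ 0) :
    lieD Z (fun q => (c q)⁻¹) x = -((c x)^2)⁻¹ * lieD Z c x := by
  have he : (fun q => (c q)⁻¹) = Inv.inv ∘ c := rfl
  have h : fderiv ℝ (Inv.inv ∘ c) x = (fderiv ℝ Inv.inv (c x)).comp (fderiv ℝ c x) :=
    fderiv_comp x (differentiableAt_inv h0) hc
  rw [lieD, he, h, fderiv_inv' h0]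
  simp only [ContinuousLinearMap.comp_apply, ContinuousLinearMap.neg_apply,
    ContinuousLinearMap.mulLeftRight_apply, lieD]
  rw [sq, mul_inv]
  ring

theorem stmt2 (F c : ℝ × ℝ → ℝ) (Z : ℝ × ℝ → ℝ × ℝ)
    (hF : ContDiff ℝ (⊤ : ℕ∞) F) (hc : ContDiff ℝ (⊤ : ℕ∞) c) (hZ : ContDiff ℝ (⊤ : ℕ∞) Z)
    (hc0 : ∀ p, c p ≠ 0)
    (F' : ℝ × ℝ → ℝ) (hF' : F' = fun p => c p * F p)
    (Z' : ℝ × ℝ → ℝ × ℝ) (hZ' : Z' = fun p => (c p)⁻¹ • Z p)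
    (p : ℝ × ℝ) (hFp : F p = 0) (hZFp : lieD Z F p = 0) :
    lieD Z' (lieD Z' (lieD Z' F')) p = (c p)⁻¹ ^ 2 * lieD Z (lieD Z (lieD Z F)) p := by
  subst hF' hZ'
  have hdF := hF.differentiable (by simp)
  have hdc := hc.differentiable (by simp)
  have hZF : ContDiff ℝ (⊤ : ℕ∞) (lieD Z F) := lieD_contDiff hF hZ
  have hZ2F : ContDiff ℝ (⊤ : ℕ∞) (lieD Z (lieD Z F)) := lieD_contDiff hZF hZ
  have hZc : ContDiff ℝ (⊤ : ℕ∞) (lieD Z c) := lieD_contDiff hc hZ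
  have ha : ContDiff ℝ (⊤ : ℕ∞) (fun q => (c q)⁻¹) := hc.inv hc0
  have hu : ContDiff ℝ (⊤ : ℕ∞) (fun q => (c q)⁻¹ * lieD Z c q) := ha.mul hZc
  have hZu : ContDiff ℝ (⊤ : ℕ∞) (lieD Z (fun q => (c q)⁻¹ * lieD Z c q)) := lieD_contDiff hu hZ
  simp only [lieD_smul]
  have h1 : (fun q => (c q)⁻¹ * lieD Z (fun r => c r * F r) q)
      = fun q => ((c q)⁻¹ * lieD Z c q) * F q + lieD Z F q := by
    funext q
    rw [lieD_mul (hdc q) (hdF q)]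
    field_simp [hc0 q]
  rw [h1]
  have h2 : (fun q => (c q)⁻¹ *
        lieD Z (fun q' => ((c q')⁻¹ * lieD Z c q') * F q' + lieD Z F q') q)
      = fun q => (c q)⁻¹ * (lieD Z (fun r => (c r)⁻¹ * lieD Z c r) q * F q
          + ((c q)⁻¹ * lieD Z c q) * lieD Z F q + lieD Z (lieD Z F) q) := by
    funext q
    rw [lieD_add ((hu.mul hF).differentiable (by simp) q) (hZF.differentiable (by simp) q),
        lieD_mul (hu.differentiable (by simp) q) (hdF q)]
  rw [h2]
  have hA : ContDiff ℝ (⊤ : ℕ∞) (fun q => lieD Z (fun r => (c r)⁻¹ * lieD Z c r) q * F q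
      + ((c q)⁻¹ * lieD Z c q) * lieD Z F q + lieD Z (lieD Z F) q) :=
    ((hZu.mul hF).add (hu.mul hZF)).add hZ2F
  rw [lieD_mul (ha.differentiable (by simp) p) (hA.differentiable (by simp) p),
      lieD_inv (hdc p) (hc0 p),
      lieD_add ((hZu.mul hF).add (hu.mul hZF) |>.differentiable (by simp) p)
        (hZ2F.differentiable (by simp) p),
      lieD_add ((hZu.mul hF).differentiable (by simp) p) ((hu.mul hZF).differentiable (by simp) p),
      lieD_mul (hZu.differentiable (by simp) p) (hdF p),
      lieD_mul (hu.differentiable (by simp) p) (hZF.differentiable (by simp) p),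
      hFp, hZFp]
  field_simp [hc0 p]
  ring
end

section
/- Let F, c : ℝ² → ℝ be smooth with c nowhere zero, let Z, Q be smooth vector fields on ℝ², and set F' = c·F, Z' = (1/c)·Z, Q' = Q. Let Ω be the standard area form and ∇ the standard gradient on ℝ². Then at every point q with F(q) = 0: Ω(Q'(q), Z'(q))·Ω(∇F'(q), ∇(Z'(F'))(q)) = Ω(Q(q), Z(q))·Ω(∇F(q), ∇(Z(F))(q)). That is, the function 𝒢 = Ω(Q,Z)·Ω(∇F, ∇ZF) restricted to the critical set {F = 0} is invariant under the factorization change (F, Z) ↦ (cF, (1/c)Z). -/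
/-- Standard gradient on `ℝ²`. -/
noncomputable def gradD (f : ℝ × ℝ → ℝ) : ℝ × ℝ → ℝ × ℝ :=
  fun p => (fderiv ℝ f p (1, 0), fderiv ℝ f p (0, 1))

/-- Standard area form on `ℝ²`. -/
def areaForm (a b : ℝ × ℝ) : ℝ := a.1 * b.2 - a.2 * b.1

theorem stmt5 (F c : ℝ × ℝ → ℝ) (Z Q : ℝ × ℝ → ℝ × ℝ)
    (hF : ContDiff ℝ (⊤ : ℕ∞) F) (hc : ContDiff ℝ (⊤ : ℕ∞) c) (hZ : ContDiff ℝ (⊤ : ℕ∞) Z)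
    (hQ : ContDiff ℝ (⊤ : ℕ∞) Q) (hc0 : ∀ p, c p ≠ 0)
    (F' : ℝ × ℝ → ℝ) (hF' : F' = fun p => c p * F p)
    (Z' : ℝ × ℝ → ℝ × ℝ) (hZ' : Z' = fun p => (c p)⁻¹ • Z p)
    (Q' : ℝ × ℝ → ℝ × ℝ) (hQ' : Q' = Q) :
    ∀ q, F q = 0 →
      areaForm (Q' q) (Z' q) * areaForm (gradD F' q) (gradD (lieD Z' F') q) =
        areaForm (Q q) (Z q) * areaForm (gradD F q) (gradD (lieD Z F) q) := by
  intro q hFq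
  have hcq := hc0 q
  have hFd : Differentiable ℝ F := hF.differentiable (by simp)
  have hcd : Differentiable ℝ c := hc.differentiable (by simp)
  have hDF : ContDiff ℝ (⊤ : ℕ∞) fun p => fderiv ℝ F p := hF.fderiv_right (by simp)
  have hDc : ContDiff ℝ (⊤ : ℕ∞) fun p => fderiv ℝ c p := hc.fderiv_right (by simp)
  have hLZF : ContDiff ℝ (⊤ : ℕ∞) (lieD Z F) := hDF.clm_apply hZ
  have hLZc : ContDiff ℝ (⊤ : ℕ∞) (lieD Z c) := hDc.clm_apply hZ
  set h : ℝ × ℝ → ℝ := fun p => (c p)⁻¹ * lieD Z c p with hh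
  have hhd : DifferentiableAt ℝ h q :=
    ((hcd q).inv hcq).mul (hLZc.differentiable (by simp) q)
  -- key identity: lieD Z' F' = lieD Z F + F * h
  have hA : lieD Z' F' = fun p => lieD Z F p + F p * h p := by
    funext p
    simp only [lieD, hZ', hF', hh]
    rw [fderiv_fun_mul (hcd p) (hFd p)]
    simp only [ContinuousLinearMap.add_apply, ContinuousLinearMap.smul_apply,
      map_smul, smul_eq_mul]
    rw [mul_add, ← mul_assoc, inv_mul_cancel₀ (hc0 p), one_mul]
    ring
  -- gradient of F' at q
  have hDF'q : fderiv ℝ F' q = c q • fderiv ℝ F q := by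
    rw [hF', fderiv_fun_mul (hcd q) (hFd q), hFq]
    simp
  -- gradient of lieD Z' F' at q
  have hDL'q : fderiv ℝ (lieD Z' F') q = fderiv ℝ (lieD Z F) q + h q • fderiv ℝ F q := by
    rw [hA, fderiv_fun_add (f := lieD Z F) (g := fun p => F p * h p) (hLZF.differentiable (by simp) q) ((hFd q).mul hhd)]
    congr 1
    rw [fderiv_fun_mul (hFd q) hhd, hFq]
    simp
  simp only [gradD]
  rw [hDF'q, hDL'q, hQ', hZ']
  simp only [areaForm, ContinuousLinearMap.add_apply, ContinuousLinearMap.smul_apply,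
    smul_eq_mul, Prod.smul_fst, Prod.smul_snd]
  field_simp
  ring
end

section
/- For the two-stroke oscillator with β = αγδ, using 𝒢(x,y) = y(β − γx), the vector field V = ∂/∂x satisfies V(F) = 0 and V(Z(F)) = 1 (where F = δ − y, Z(F) = x − αy), and: V(𝒢) = −γy, V²(𝒢) = 0. At the contact point p = (αδ, δ): V(𝒢)(p) = −γδ < 0 (slow-fast Hopf point), and the criticality quantity σ = (1/2)·V²(𝒢)(p) − V(𝒢)(p)·𝒜 = γδ·(α/δ) = αγ > 0 (subcritical Hopf bifurcation). -/
lemma hF' (δ : ℝ) (p : ℝ × ℝ) :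
    HasFDerivAt (fun p : ℝ × ℝ => δ - p.2)
      ((0 : ℝ × ℝ →L[ℝ] ℝ) - ContinuousLinearMap.snd ℝ ℝ ℝ) p :=
  (hasFDerivAt_const δ p).sub (hasFDerivAt_snd)

lemma hZF' (α : ℝ) (p : ℝ × ℝ) :
    HasFDerivAt (fun p : ℝ × ℝ => p.1 - α * p.2)
      (ContinuousLinearMap.fst ℝ ℝ ℝ - α • ContinuousLinearMap.snd ℝ ℝ ℝ) p :=
  hasFDerivAt_fst.sub ((hasFDerivAt_snd (p := p)).const_mul α)

lemma hG' (β γ : ℝ) (p : ℝ × ℝ) :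
    HasFDerivAt (fun p : ℝ × ℝ => p.2 * (β - γ * p.1))
      (p.2 • ((0 : ℝ × ℝ →L[ℝ] ℝ) - γ • ContinuousLinearMap.fst ℝ ℝ ℝ)
        + (β - γ * p.1) • ContinuousLinearMap.snd ℝ ℝ ℝ) p :=
  (hasFDerivAt_snd (p := p)).mul
    ((hasFDerivAt_const β p).sub ((hasFDerivAt_fst (p := p)).const_mul γ))


theorem stmt15 (α β γ δ : ℝ) (hα : 0 < α) (hγ : 0 < γ) (hδ : 0 < δ)
    (hβ : β = α * γ * δ)
    (F : ℝ × ℝ → ℝ) (hF : F = fun p => δ - p.2)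
    (ZF : ℝ × ℝ → ℝ) (hZF : ZF = fun p => p.1 - α * p.2)
    (G : ℝ × ℝ → ℝ) (hG : G = fun p => p.2 * (β - γ * p.1))
    (V : ℝ × ℝ → ℝ × ℝ) (hV : V = fun _ => ((1 : ℝ), (0 : ℝ)))
    (A : ℝ) (hA : A = α / δ) :
    (∀ p, lieD V F p = 0) ∧ (∀ p, lieD V ZF p = 1) ∧
    (∀ p : ℝ × ℝ, lieD V G p = -γ * p.2) ∧
    (∀ p : ℝ × ℝ, lieD V (lieD V G) p = 0) ∧
    lieD V G (α * δ, δ) = -γ * δ ∧ lieD V G (α * δ, δ) < 0 ∧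
    (1 / 2) * lieD V (lieD V G) (α * δ, δ) - lieD V G (α * δ, δ) * A = α * γ ∧
    0 < (1 / 2) * lieD V (lieD V G) (α * δ, δ) - lieD V G (α * δ, δ) * A := by
  subst hF hZF hG hV hA
  have h1 : ∀ p, lieD (fun _ => ((1:ℝ),(0:ℝ))) (fun p : ℝ × ℝ => δ - p.2) p = 0 := by
    intro p
    simp [lieD, (hF' δ p).fderiv]
  have h2 : ∀ p, lieD (fun _ => ((1:ℝ),(0:ℝ))) (fun p : ℝ × ℝ => p.1 - α * p.2) p = 1 := by
    intro p
    simp [lieD, (hZF' α p).fderiv]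
  have h3 : ∀ p : ℝ × ℝ, lieD (fun _ => ((1:ℝ),(0:ℝ))) (fun p : ℝ × ℝ => p.2 * (β - γ * p.1)) p = -γ * p.2 := by
    intro p
    simp [lieD, (hG' β γ p).fderiv]
    ring
  have h4 : ∀ p : ℝ × ℝ, lieD (fun _ => ((1:ℝ),(0:ℝ)))
      (lieD (fun _ => ((1:ℝ),(0:ℝ))) (fun p : ℝ × ℝ => p.2 * (β - γ * p.1))) p = 0 := by
    intro p
    have : lieD (fun _ => ((1:ℝ),(0:ℝ))) (fun p : ℝ × ℝ => p.2 * (β - γ * p.1))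
        = fun p : ℝ × ℝ => -γ * p.2 := funext h3
    rw [this]
    have hd : HasFDerivAt (fun p : ℝ × ℝ => -γ * p.2)
        ((-γ) • ContinuousLinearMap.snd ℝ ℝ ℝ) p :=
      (hasFDerivAt_snd (p := p)).const_mul (-γ)
    simp only [lieD]; rw [hd.fderiv]; simp
  refine ⟨h1, h2, h3, h4, ?_, ?_, ?_, ?_⟩
  · rw [h3]
  · rw [h3]; nlinarith
  · rw [h3, h4]; field_simp; ring
  · rw [h3, h4]; have : -γ * δ * (α / δ) = -(α*γ) := by field_simp
    rw [this]; nlinarith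
end

section
/- Consider the normal-form data F(x,y) = y − x²/2, Z = φ(x,y)·∂/∂x, Q = φ(x,y)·g(x)·∂/∂y on ℝ², with φ smooth, φ(0,0) = 1, and g smooth. Then the invariant 𝒢 = Ω(Q,Z)·Ω(∇F, ∇Z(F)) satisfies 𝒢(x,y) = −φ(x,y)²·∂ₓ(x·φ(x,y))·g(x), where ∂ₓ denotes the derivation ∂/∂x + x·∂/∂y (the derivative along the critical curve). In particular 𝒢(0,0) = −g(0). -/
/-- The derivation `∂ₓ = ∂/∂x + x·∂/∂y` along the critical curve. -/
noncomputable def delx (f : ℝ × ℝ → ℝ) : ℝ × ℝ → ℝ :=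
  fun p => fderiv ℝ f p (1, p.1)

lemma keyF (p v : ℝ × ℝ) :
    fderiv ℝ (fun p : ℝ × ℝ => p.2 - p.1 ^ 2 / 2) p v = v.2 - p.1 * v.1 := by
  have heq : (fun p : ℝ × ℝ => p.2 - p.1 ^ 2 / 2)
      = fun p : ℝ × ℝ => p.2 - (1/2) * (p.1 * p.1) := by
    funext q; ring
  have h1 : HasFDerivAt (fun p : ℝ × ℝ => p.2 - p.1 ^ 2 / 2)
      (ContinuousLinearMap.snd ℝ ℝ ℝ - p.1 • ContinuousLinearMap.fst ℝ ℝ ℝ) p := by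
    rw [heq]
    have := (hasFDerivAt_snd (𝕜 := ℝ) (p := p)).sub
      (((hasFDerivAt_fst (𝕜 := ℝ) (p := p)).mul
        (hasFDerivAt_fst (𝕜 := ℝ) (p := p))).const_mul (1/2))
    refine this.congr_fderiv ?_
    refine ContinuousLinearMap.ext fun w => ?_
    simp
    ring
  rw [h1.fderiv]
  simp [mul_comm]

theorem stmt18 (φ : ℝ × ℝ → ℝ) (g : ℝ → ℝ)
    (hφ : ContDiff ℝ (⊤ : ℕ∞) φ) (hφ0 : φ (0, 0) = 1) (hg : ContDiff ℝ (⊤ : ℕ∞) g)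
    (F : ℝ × ℝ → ℝ) (hF : F = fun p => p.2 - p.1 ^ 2 / 2)
    (Z : ℝ × ℝ → ℝ × ℝ) (hZ : Z = fun p => (φ p, (0 : ℝ)))
    (Q : ℝ × ℝ → ℝ × ℝ) (hQ : Q = fun p => ((0 : ℝ), φ p * g p.1))
    (G : ℝ × ℝ → ℝ)
    (hG : G = fun p => areaForm (Q p) (Z p) * areaForm (gradD F p) (gradD (lieD Z F) p)) :
    (∀ p : ℝ × ℝ, G p = -(φ p) ^ 2 * delx (fun q => q.1 * φ q) p * g p.1) ∧
    G (0, 0) = -g 0 := by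
  set h : ℝ × ℝ → ℝ := fun q => q.1 * φ q with hh
  have hZF : lieD Z F = fun p => -(h p) := by
    funext p
    simp only [lieD, hF, hZ, keyF, hh]
    ring
  have main : ∀ p : ℝ × ℝ, G p = -(φ p) ^ 2 * delx h p * g p.1 := by
    intro p
    have hdiff : Differentiable ℝ h :=
      differentiable_fst.mul (hφ.differentiable (by simp))
    have hlin : delx h p = fderiv ℝ h p (1, 0) + p.1 * fderiv ℝ h p (0, 1) := by
      have : ((1 : ℝ), p.1) = (1, 0) + p.1 • ((0 : ℝ), (1 : ℝ)) := by
        simp [Prod.ext_iff]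
      rw [delx, this, map_add, map_smul]
      simp
    have hgradZF : gradD (lieD Z F) p =
        (-(fderiv ℝ h p (1, 0)), -(fderiv ℝ h p (0, 1))) := by
      rw [hZF, gradD]
      simp [fderiv_neg]
    have hgradF : gradD F p = (-p.1, 1) := by
      simp [gradD, hF, keyF]
    rw [hG]
    simp only []
    rw [hgradZF, hgradF]
    simp only [hQ, hZ, areaForm]
    simp only [hlin]
    ring
  refine ⟨main, ?_⟩
  rw [main (0, 0)]
  have : delx h (0, 0) = φ (0, 0) := by
    have hd1 : DifferentiableAt ℝ (fun q : ℝ × ℝ => q.1) (0, 0) := differentiableAt_fst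
    have hd2 : DifferentiableAt ℝ φ (0, 0) := (hφ.differentiable (by simp)) _
    rw [delx]
    simp only [hh]
    rw [fderiv_fun_mul hd1 hd2]
    simp [fderiv_fst]
  rw [this, hφ0]
  ring
end
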